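/- arXiv:gr-qc/0107021 — 7 statements merged into one kernel-verified Lean document; each statement's English description precedes it below -/
import Mathlib

section
/- Let V be a vector space over ℂ, let R_ZF, R_FF, R_xx ∈ ℂ with R_xx·R_FF ≠ 1 and R_ZF ≠ 0, let Z⁰, F⁰, w ∈ V, and let Z, F, x ∈ V satisfy Z = Z⁰ + R_ZF·x, F = F⁰ + R_FF·x, x = w + R_xx·F. Define the renormalized output O := R_ZF⁻¹·(1 − R_xx·R_FF)·Z, the effective output fluctuation 𝒵 := R_ZF⁻¹·Z⁰, and the effective back-action force ℱ := F⁰ − R_FF·R_ZF⁻¹·Z⁰. Then O = 𝒵 + R_xx·ℱ + w. -/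
/-- Effective description of the renormalized output of a linear quantum-measurement
device: `O = 𝒵 + R_xx • ℱ + w`, splitting the output into shot noise, back-action
noise, and the free probe motion plus signal. -/
theorem renormalized_output_decomposition
    {V : Type*} [AddCommGroup V] [Module ℂ V]
    (RZF RFF Rxx : ℂ) (h : Rxx * RFF ≠ 1) (hZF : RZF ≠ 0)
    (Z0 F0 w Z F x : V)
    (hZ : Z = Z0 + RZF • x)
    (hF : F = F0 + RFF • x)
    (hx : x = w + Rxx • F)
    (O Zeff Feff : V)
    (hO : O = (RZF⁻¹ * (1 - Rxx * RFF)) • Z)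
    (hZeff : Zeff = RZF⁻¹ • Z0)
    (hFeff : Feff = F0 - (RFF * RZF⁻¹) • Z0) :
    O = Zeff + Rxx • Feff + w := by
  have hy : (1 - Rxx * RFF) ≠ 0 := sub_ne_zero.mpr (fun e => h e.symm)
  rw [hF] at hx
  have key : (1 - Rxx * RFF) • x = w + Rxx • F0 := by
    rw [sub_smul, one_smul]
    nth_rewrite 1 [hx]
    module
  have hxval : x = (1 - Rxx * RFF)⁻¹ • (w + Rxx • F0) := by
    rw [← key, smul_smul, inv_mul_cancel₀ hy, one_smul]
  subst hO hZeff hFeff hZ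
  rw [hxval]
  match_scalars <;> field_simp <;> ring
end

section
/- Let γ, I₀ be positive reals, 0 < ρ < 1, φ ∈ ℝ, and let m, L, ω₀ > 0 with I_SQL := m·L²·γ⁴/(4ω₀); set D := 1 + 2ρ·cos(2φ) + ρ² and Ω± := (±2ργ·sin(2φ) − iγ(1 − ρ²))/D. Then the complex number (ΔΩ₀)² := −(I₀·γ³/(2·I_SQL))·(Ω₊ − Ω₋)/(Ω₊·Ω₋) equals the real number (I₀/I_SQL)·(2ργ²·sin(2φ))·D/(4ρ²·sin²(2φ) + (1 − ρ²)²); this number is strictly positive when 0 < φ < π/2 and strictly negative when π/2 < φ < π. -/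
/-!
The two free resonances are mirror images across the imaginary axis, `Ω₋ = -conj Ω₊`, so
`(Ω₊ - Ω₋)/(Ω₊Ω₋) = (z + conj z)/(-z conj z) = -2 Re(1/z)` for `z = Ω₊` is real, and
`Re(1/Ω₊) = 2ργ sin(2φ) D / (γ² (4ρ² sin²(2φ) + (1-ρ²)²))`. Since `D > 0` for `0 < ρ < 1`,
the shift has the sign of `sin(2φ)`.
-/

open ComplexConjugate

theorem sub_neg_conj_div_mul_neg_conj (z : ℂ) :
    (z - -conj z) / (z * -conj z) = ((-(2 * z⁻¹.re) : ℝ) : ℂ) := by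
  rw [sub_neg_eq_add, mul_neg, Complex.add_conj, Complex.mul_conj, Complex.inv_re]
  push_cast
  ring

theorem ofReal_neg_sub_I_mul_div_eq_neg_conj (a b D : ℝ) :
    (((-a : ℝ) : ℂ) - Complex.I * b) / D = -conj ((a - Complex.I * b) / D : ℂ) := by
  simp only [Complex.ofReal_neg, map_div₀, map_sub, Complex.conj_ofReal, map_mul, Complex.conj_I,
    neg_mul, sub_neg_eq_add]
  ring

theorem inv_re_sub_I_mul_div (a b D : ℝ) :
    (((a - Complex.I * b) / D : ℂ)⁻¹).re = a * D / (a ^ 2 + b ^ 2) := by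
  rw [inv_div]
  simp only [Complex.div_re, Complex.ofReal_re, Complex.sub_re, Complex.mul_re, Complex.I_re,
    zero_mul, Complex.I_im, Complex.ofReal_im, mul_zero, sub_self, sub_zero, Complex.normSq_apply,
    Complex.sub_im, Complex.mul_im, one_mul, zero_add, zero_sub, mul_neg, neg_mul, neg_neg,
    neg_zero, zero_div, add_zero]
  ring

theorem one_add_two_mul_cos_add_sq_pos {ρ : ℝ} (hρ : |ρ| < 1) (θ : ℝ) :
    0 < 1 + 2 * ρ * Real.cos θ + ρ ^ 2 := by
  have hcos : |ρ * Real.cos θ| ≤ |ρ| := by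
    rw [abs_mul]; exact mul_le_of_le_one_right (abs_nonneg ρ) (Real.abs_cos_le_one θ)
  nlinarith [neg_abs_le (ρ * Real.cos θ), sq_abs ρ, pow_pos (sub_pos.2 hρ) 2]

theorem sin_two_mul_neg_of_pi_div_two_lt {φ : ℝ} (h₁ : Real.pi / 2 < φ) (h₂ : φ < Real.pi) :
    Real.sin (2 * φ) < 0 := by
  rw [← Real.sin_sub_two_pi]
  exact Real.sin_neg_of_neg_of_neg_pi_lt (by linarith) (by linarith)

/-- Leading-order shift of the doubly degenerate mechanical resonance `Ω² = 0`:
`(ΔΩ₀)² = -(I₀γ³/(2I_SQL))(Ω₊-Ω₋)/(Ω₊Ω₋)` is real, positive for `0 < φ < π/2`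
(optical spring) and negative for `π/2 < φ < π` (non-oscillating instability). -/
theorem mechanical_resonance_shift
    (m L γ ω₀ I₀ ρ φ : ℝ)
    (hm : 0 < m) (hL : 0 < L) (hγ : 0 < γ) (hω : 0 < ω₀) (hI : 0 < I₀)
    (hρ0 : 0 < ρ) (hρ1 : ρ < 1)
    (D : ℝ) (hD : D = 1 + 2 * ρ * Real.cos (2 * φ) + ρ ^ 2)
    (Ωp Ωm : ℂ)
    (hp : Ωp = (((2 * ρ * γ * Real.sin (2 * φ) : ℝ) : ℂ)
          - Complex.I * (γ : ℂ) * ((1 - ρ ^ 2 : ℝ) : ℂ)) / ((D : ℝ) : ℂ))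
    (hm' : Ωm = (((-(2 * ρ * γ * Real.sin (2 * φ)) : ℝ) : ℂ)
          - Complex.I * (γ : ℂ) * ((1 - ρ ^ 2 : ℝ) : ℂ)) / ((D : ℝ) : ℂ))
    (ISQL : ℝ) (hSQL : ISQL = m * L ^ 2 * γ ^ 4 / (4 * ω₀))
    (ΔΩ₀sq : ℂ)
    (hΔ : ΔΩ₀sq = -(((I₀ * γ ^ 3 / (2 * ISQL) : ℝ) : ℂ)) * (Ωp - Ωm) / (Ωp * Ωm)) :
    ΔΩ₀sq = (((I₀ / ISQL) * (2 * ρ * γ ^ 2 * Real.sin (2 * φ)) * D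
        / (4 * ρ ^ 2 * Real.sin (2 * φ) ^ 2 + (1 - ρ ^ 2) ^ 2) : ℝ) : ℂ) ∧
    (0 < φ → φ < Real.pi / 2 →
      0 < (I₀ / ISQL) * (2 * ρ * γ ^ 2 * Real.sin (2 * φ)) * D
        / (4 * ρ ^ 2 * Real.sin (2 * φ) ^ 2 + (1 - ρ ^ 2) ^ 2)) ∧
    (Real.pi / 2 < φ → φ < Real.pi →
      (I₀ / ISQL) * (2 * ρ * γ ^ 2 * Real.sin (2 * φ)) * D
        / (4 * ρ ^ 2 * Real.sin (2 * φ) ^ 2 + (1 - ρ ^ 2) ^ 2) < 0) := by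
  set s := Real.sin (2 * φ)
  rw [mul_assoc Complex.I, ← Complex.ofReal_mul] at hp hm'
  have hΩm : Ωm = -conj Ωp := by rw [hm', hp, ofReal_neg_sub_I_mul_div_eq_neg_conj]
  have hQ : 0 < 4 * ρ ^ 2 * s ^ 2 + (1 - ρ ^ 2) ^ 2 := by
    have : 0 < 1 - ρ ^ 2 := by nlinarith
    positivity
  have hD0 : 0 < D := hD ▸ one_add_two_mul_cos_add_sq_pos (abs_lt.2 ⟨by linarith, hρ1⟩) _
  have hSQL0 : 0 < ISQL := hSQL ▸ by positivity
  have hc : 0 < I₀ / ISQL * (2 * ρ * γ ^ 2) * D / (4 * ρ ^ 2 * s ^ 2 + (1 - ρ ^ 2) ^ 2) := by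
    have := div_pos hI hSQL0
    positivity
  have hshift : I₀ / ISQL * (2 * ρ * γ ^ 2 * s) * D / (4 * ρ ^ 2 * s ^ 2 + (1 - ρ ^ 2) ^ 2)
      = I₀ / ISQL * (2 * ρ * γ ^ 2) * D / (4 * ρ ^ 2 * s ^ 2 + (1 - ρ ^ 2) ^ 2) * s := by
    ring
  refine ⟨?_, fun h₁ h₂ => ?_, fun h₁ h₂ => ?_⟩
  · rw [hΔ, hΩm, mul_div_assoc, sub_neg_conj_div_mul_neg_conj, hp, inv_re_sub_I_mul_div]
    norm_cast
    field_simp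
    ring
  · rw [hshift]
    exact mul_pos hc (Real.sin_pos_of_pos_of_lt_pi (by linarith) (by linarith))
  · rw [hshift]
    exact mul_neg_of_pos_of_neg hc (sin_two_mul_neg_of_pi_div_two_lt h₁ h₂)
end

section
/- Let γ, I₀ be positive reals, 0 < ρ < 1, φ ∈ ℝ, and let m, L, ω₀ > 0 with I_SQL := m·L²·γ⁴/(4ω₀); set D := 1 + 2ρ·cos(2φ) + ρ², Ω± := (±2ργ·sin(2φ) − iγ(1 − ρ²))/D, and ΔΩ± := ∓(I₀·γ³/(2·I_SQL))/Ω±². Then Re(ΔΩ±) = ∓(I₀·γ/(2·I_SQL))·[4ρ²·sin²(2φ) − (1 − ρ²)²]·D²/[4ρ²·sin²(2φ) + (1 − ρ²)²]² and Im(ΔΩ₊) = Im(ΔΩ₋) = −(I₀/I_SQL)·[2ργ·sin(2φ)·(1 − ρ²)]·D²/[4ρ²·sin²(2φ) + (1 − ρ²)²]². In particular, if 0 < φ < π/2 then Im(ΔΩ±) < 0. -/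
/-!
Writing `Ω± = (a - b i)/D` with `a = ±2ργ sin 2φ` and `b = γ(1 - ρ²)`, one has
`1/Ω±² = D² (a + b i)² / (a² + b²)²`, so the shifts are read off from
`(a + b i)² = a² - b² + 2ab i`. Both the sign in front of `ΔΩ±` and the imaginary part `2ab`
are odd in `a`, whence `Im ΔΩ₊ = Im ΔΩ₋`; for `0 < φ < π/2` every factor of it is positive.
-/

open Complex

theorem div_sq_sub_mul_I (c D a b : ℝ) :
    (c : ℂ) / ((a - b * I) / D) ^ 2 =
      ((c * D ^ 2 / (a ^ 2 + b ^ 2) ^ 2 : ℝ) : ℂ) * (a + b * I) ^ 2 := by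
  rcases eq_or_ne D 0 with rfl | hD
  · simp
  rcases eq_or_ne (a ^ 2 + b ^ 2) 0 with hab | hab
  · obtain ⟨rfl, rfl⟩ : a = 0 ∧ b = 0 := by constructor <;> nlinarith [sq_nonneg a, sq_nonneg b]
    simp
  have hconj : ((a : ℂ) - b * I) * (a + b * I) = (a : ℂ) ^ 2 + (b : ℂ) ^ 2 := by
    ring_nf; rw [I_sq]; ring
  have hprod : ((a : ℂ) - b * I) * (a + b * I) ≠ 0 := by rw [hconj]; exact_mod_cast hab
  obtain ⟨hminus, hplus⟩ := mul_ne_zero_iff.mp hprod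
  push_cast
  rw [← hconj]
  field_simp

theorem re_div_sq_sub_mul_I (c D a b : ℝ) :
    ((c : ℂ) / ((a - b * I) / D) ^ 2).re = c * D ^ 2 * (a ^ 2 - b ^ 2) / (a ^ 2 + b ^ 2) ^ 2 := by
  rw [div_sq_sub_mul_I, re_ofReal_mul]
  simp only [sq, mul_re, add_re, ofReal_re, I_re, mul_zero, ofReal_im, I_im, mul_one, sub_self,
    add_zero, add_im, mul_im, zero_add]
  ring

theorem im_div_sq_sub_mul_I (c D a b : ℝ) :
    ((c : ℂ) / ((a - b * I) / D) ^ 2).im = c * D ^ 2 * (2 * a * b) / (a ^ 2 + b ^ 2) ^ 2 := by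
  rw [div_sq_sub_mul_I, im_ofReal_mul]
  simp only [sq, mul_im, add_re, ofReal_re, mul_re, I_re, mul_zero, ofReal_im, I_im, mul_one,
    sub_self, add_zero, add_im, zero_add]
  ring

/-- Leading-order shift `ΔΩ± = ∓(I₀γ³/(2I_SQL))/Ω±²` of the optical resonances:
explicit real and imaginary parts; for `0 < φ < π/2` the imaginary parts are
negative, i.e. the coupled optical resonances become more stable. -/
theorem optical_resonance_shift
    (m L γ ω₀ I₀ ρ φ : ℝ)
    (hm : 0 < m) (hL : 0 < L) (hγ : 0 < γ) (hω : 0 < ω₀) (hI : 0 < I₀)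
    (hρ0 : 0 < ρ) (hρ1 : ρ < 1)
    (D : ℝ) (hD : D = 1 + 2 * ρ * Real.cos (2 * φ) + ρ ^ 2)
    (Ωp Ωm : ℂ)
    (hp : Ωp = (((2 * ρ * γ * Real.sin (2 * φ) : ℝ) : ℂ)
          - Complex.I * (γ : ℂ) * ((1 - ρ ^ 2 : ℝ) : ℂ)) / ((D : ℝ) : ℂ))
    (hm' : Ωm = (((-(2 * ρ * γ * Real.sin (2 * φ)) : ℝ) : ℂ)
          - Complex.I * (γ : ℂ) * ((1 - ρ ^ 2 : ℝ) : ℂ)) / ((D : ℝ) : ℂ))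
    (ISQL : ℝ) (hSQL : ISQL = m * L ^ 2 * γ ^ 4 / (4 * ω₀))
    (ΔΩp ΔΩm : ℂ)
    (hΔp : ΔΩp = -(((I₀ * γ ^ 3 / (2 * ISQL) : ℝ) : ℂ)) / Ωp ^ 2)
    (hΔm : ΔΩm = ((I₀ * γ ^ 3 / (2 * ISQL) : ℝ) : ℂ) / Ωm ^ 2) :
    ΔΩp.re = -((I₀ * γ / (2 * ISQL)) * (4 * ρ ^ 2 * Real.sin (2 * φ) ^ 2 - (1 - ρ ^ 2) ^ 2)
        * D ^ 2 / (4 * ρ ^ 2 * Real.sin (2 * φ) ^ 2 + (1 - ρ ^ 2) ^ 2) ^ 2) ∧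
    ΔΩm.re = (I₀ * γ / (2 * ISQL)) * (4 * ρ ^ 2 * Real.sin (2 * φ) ^ 2 - (1 - ρ ^ 2) ^ 2)
        * D ^ 2 / (4 * ρ ^ 2 * Real.sin (2 * φ) ^ 2 + (1 - ρ ^ 2) ^ 2) ^ 2 ∧
    ΔΩp.im = -((I₀ / ISQL) * (2 * ρ * γ * Real.sin (2 * φ) * (1 - ρ ^ 2))
        * D ^ 2 / (4 * ρ ^ 2 * Real.sin (2 * φ) ^ 2 + (1 - ρ ^ 2) ^ 2) ^ 2) ∧
    ΔΩm.im = ΔΩp.im ∧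
    (0 < φ → φ < Real.pi / 2 → ΔΩp.im < 0 ∧ ΔΩm.im < 0) := by
  set s := Real.sin (2 * φ)
  have hρ : 0 < 1 - ρ ^ 2 := by nlinarith
  -- `D ≥ (1 - ρ)² > 0`
  have hDpos : 0 < D := by nlinarith [Real.neg_one_le_cos (2 * φ)]
  have hISQL : 0 < ISQL := by rw [hSQL]; positivity
  have hY : 0 < 4 * ρ ^ 2 * s ^ 2 + (1 - ρ ^ 2) ^ 2 := by positivity
  have hΔp' : ΔΩp = ((-(I₀ * γ ^ 3 / (2 * ISQL)) : ℝ) : ℂ) /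
      ((((2 * ρ * γ * s : ℝ) : ℂ) - ((γ * (1 - ρ ^ 2) : ℝ) : ℂ) * I) / (D : ℂ)) ^ 2 := by
    rw [hΔp, hp]; push_cast; ring
  have hΔm' : ΔΩm = ((I₀ * γ ^ 3 / (2 * ISQL) : ℝ) : ℂ) /
      ((((-(2 * ρ * γ * s) : ℝ) : ℂ) - ((γ * (1 - ρ ^ 2) : ℝ) : ℂ) * I) / (D : ℂ)) ^ 2 := by
    rw [hΔm, hm']; push_cast; ring
  have him : ΔΩp.im = -((I₀ / ISQL) * (2 * ρ * γ * s * (1 - ρ ^ 2))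
      * D ^ 2 / (4 * ρ ^ 2 * s ^ 2 + (1 - ρ ^ 2) ^ 2) ^ 2) := by
    rw [hΔp', im_div_sq_sub_mul_I]
    field_simp
    ring
  have him_eq : ΔΩm.im = ΔΩp.im := by
    rw [him, hΔm', im_div_sq_sub_mul_I]
    field_simp
    ring
  refine ⟨?_, ?_, him, him_eq, fun hφ0 hφ1 => ?_⟩
  · rw [hΔp', re_div_sq_sub_mul_I]
    field_simp
    ring
  · rw [hΔm', re_div_sq_sub_mul_I]
    field_simp
    ring
  · have hs : 0 < s := Real.sin_pos_of_pos_of_lt_pi (by linarith) (by linarith)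
    have hneg : ΔΩp.im < 0 := by rw [him]; exact neg_neg_of_pos (by positivity)
    exact ⟨hneg, him_eq ▸ hneg⟩
end

section
/- Let I₀, ω₀, L, γ be positive reals, 0 < ρ < 1, φ ∈ ℝ; set D := 1 + 2ρ·cos(2φ) + ρ², Ω± := (±2ργ·sin(2φ) − iγ(1 − ρ²))/D, and R_FF(Ω) := (2 I₀ ω₀ / L²)·ρ·sin(2φ)/(D·(Ω − Ω₊)·(Ω − Ω₋)). Then the static ponderomotive spring constant K(0) := −R_FF(0) is well defined (0 ≠ Ω±) and equals the real number (2 I₀ ω₀/(L²·γ²))·ρ·sin(2φ)·D/(4ρ²·sin²(2φ) + (1 − ρ²)²); it is strictly positive when 0 < φ < π/2 and strictly negative when π/2 < φ < π. -/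
/-- The static ponderomotive spring constant `K(0) = -R_FF(0)` is well defined and
real, positive for `0 < φ < π/2` (restoring force) and negative for `π/2 < φ < π`
(anti-restoring force, non-oscillating instability). -/
theorem static_ponderomotive_rigidity
    (I₀ ω₀ L γ ρ φ : ℝ)
    (hI : 0 < I₀) (hω : 0 < ω₀) (hL : 0 < L) (hγ : 0 < γ)
    (hρ0 : 0 < ρ) (hρ1 : ρ < 1)
    (D : ℝ) (hD : D = 1 + 2 * ρ * Real.cos (2 * φ) + ρ ^ 2)
    (Ωp Ωm : ℂ)
    (hp : Ωp = (((2 * ρ * γ * Real.sin (2 * φ) : ℝ) : ℂ)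
          - Complex.I * (γ : ℂ) * ((1 - ρ ^ 2 : ℝ) : ℂ)) / ((D : ℝ) : ℂ))
    (hm : Ωm = (((-(2 * ρ * γ * Real.sin (2 * φ)) : ℝ) : ℂ)
          - Complex.I * (γ : ℂ) * ((1 - ρ ^ 2 : ℝ) : ℂ)) / ((D : ℝ) : ℂ))
    (RFF : ℂ → ℂ)
    (hRFF : ∀ Ω : ℂ, RFF Ω = ((2 * I₀ * ω₀ / L ^ 2 : ℝ) : ℂ) * ((ρ : ℝ) : ℂ)
        * ((Real.sin (2 * φ) : ℝ) : ℂ) / (((D : ℝ) : ℂ) * (Ω - Ωp) * (Ω - Ωm))) :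
    (0 : ℂ) ≠ Ωp ∧ (0 : ℂ) ≠ Ωm ∧
    -RFF 0 = (((2 * I₀ * ω₀ / (L ^ 2 * γ ^ 2)) * ρ * Real.sin (2 * φ) * D
        / (4 * ρ ^ 2 * Real.sin (2 * φ) ^ 2 + (1 - ρ ^ 2) ^ 2) : ℝ) : ℂ) ∧
    (0 < φ → φ < Real.pi / 2 →
      0 < (2 * I₀ * ω₀ / (L ^ 2 * γ ^ 2)) * ρ * Real.sin (2 * φ) * D
        / (4 * ρ ^ 2 * Real.sin (2 * φ) ^ 2 + (1 - ρ ^ 2) ^ 2)) ∧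
    (Real.pi / 2 < φ → φ < Real.pi →
      (2 * I₀ * ω₀ / (L ^ 2 * γ ^ 2)) * ρ * Real.sin (2 * φ) * D
        / (4 * ρ ^ 2 * Real.sin (2 * φ) ^ 2 + (1 - ρ ^ 2) ^ 2) < 0) := by
  have hc1 : Real.cos (2 * φ) ≤ 1 := Real.cos_le_one _
  have hc2 : -1 ≤ Real.cos (2 * φ) := Real.neg_one_le_cos _
  have hDpos : 0 < D := by nlinarith
  have hDne : (D : ℂ) ≠ 0 := by exact_mod_cast hDpos.ne'
  have h1ρ : 0 < 1 - ρ ^ 2 := by nlinarith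
  have hb : 0 < γ * (1 - ρ ^ 2) := mul_pos hγ h1ρ
  have hΩp : (0 : ℂ) ≠ Ωp := by
    intro h
    have h2 : ((2 * ρ * γ * Real.sin (2 * φ) : ℝ) : ℂ)
        - Complex.I * (γ : ℂ) * ((1 - ρ ^ 2 : ℝ) : ℂ) = 0 := by
      have := h.symm
      rw [hp, div_eq_zero_iff] at this
      tauto
    have him := congrArg Complex.im h2
    simp only [Complex.sub_im, Complex.mul_im, Complex.mul_re, Complex.I_re, Complex.I_im,
      Complex.ofReal_re, Complex.ofReal_im, Complex.zero_im] at him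
    nlinarith
  have hΩm : (0 : ℂ) ≠ Ωm := by
    intro h
    have h2 : ((-(2 * ρ * γ * Real.sin (2 * φ)) : ℝ) : ℂ)
        - Complex.I * (γ : ℂ) * ((1 - ρ ^ 2 : ℝ) : ℂ) = 0 := by
      have := h.symm
      rw [hm, div_eq_zero_iff] at this
      tauto
    have him := congrArg Complex.im h2
    simp only [Complex.sub_im, Complex.mul_im, Complex.mul_re, Complex.I_re, Complex.I_im,
      Complex.ofReal_re, Complex.ofReal_im, Complex.zero_im] at him
    nlinarith
  set a : ℝ := 2 * ρ * γ * Real.sin (2 * φ) with ha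
  set b : ℝ := γ * (1 - ρ ^ 2) with hbdef
  have hs : 0 < a ^ 2 + b ^ 2 := by positivity
  have hnum : (((a : ℝ) : ℂ) - Complex.I * ((b : ℝ) : ℂ))
      * (((-a : ℝ) : ℂ) - Complex.I * ((b : ℝ) : ℂ)) = ((-(a ^ 2 + b ^ 2) : ℝ) : ℂ) := by
    push_cast
    linear_combination ((b : ℂ) ^ 2) * Complex.I_sq
  have hprod : Ωp * Ωm = (((-(a ^ 2 + b ^ 2)) / D ^ 2 : ℝ) : ℂ) := by
    have hp' : Ωp = (((a : ℝ) : ℂ) - Complex.I * ((b : ℝ) : ℂ)) / ((D : ℝ) : ℂ) := by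
      rw [hp, ha, hbdef]; push_cast; ring
    have hm' : Ωm = (((-a : ℝ) : ℂ) - Complex.I * ((b : ℝ) : ℂ)) / ((D : ℝ) : ℂ) := by
      rw [hm, ha, hbdef]; push_cast; ring
    rw [hp', hm', div_mul_div_comm, hnum]
    push_cast
    ring
  have hdpos : 0 < 4 * ρ ^ 2 * Real.sin (2 * φ) ^ 2 + (1 - ρ ^ 2) ^ 2 := by positivity
  have hkey : -RFF 0 = (((2 * I₀ * ω₀ / (L ^ 2 * γ ^ 2)) * ρ * Real.sin (2 * φ) * D
      / (4 * ρ ^ 2 * Real.sin (2 * φ) ^ 2 + (1 - ρ ^ 2) ^ 2) : ℝ) : ℂ) := by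
    have h0 : -RFF 0 = -(((2 * I₀ * ω₀ / L ^ 2 : ℝ) : ℂ) * ((ρ : ℝ) : ℂ)
        * ((Real.sin (2 * φ) : ℝ) : ℂ) / (((D : ℝ) : ℂ) * ((-(a ^ 2 + b ^ 2)) / D ^ 2 : ℝ))) := by
      rw [hRFF 0]
      rw [show ((D : ℝ) : ℂ) * ((0 : ℂ) - Ωp) * ((0 : ℂ) - Ωm)
          = ((D : ℝ) : ℂ) * (Ωp * Ωm) by ring, hprod]
    rw [h0]
    have hreal : -((2 * I₀ * ω₀ / L ^ 2) * ρ * Real.sin (2 * φ)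
        / (D * ((-(a ^ 2 + b ^ 2)) / D ^ 2)))
        = (2 * I₀ * ω₀ / (L ^ 2 * γ ^ 2)) * ρ * Real.sin (2 * φ) * D
        / (4 * ρ ^ 2 * Real.sin (2 * φ) ^ 2 + (1 - ρ ^ 2) ^ 2) := by
      rw [ha, hbdef]
      have hsid : D * (-((2 * ρ * γ * Real.sin (2 * φ)) ^ 2 + (γ * (1 - ρ ^ 2)) ^ 2) / D ^ 2)
          = -(γ ^ 2 * (4 * ρ ^ 2 * Real.sin (2 * φ) ^ 2 + (1 - ρ ^ 2) ^ 2) / D) := by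
        field_simp
        ring
      rw [hsid, div_neg, neg_neg, div_div_eq_mul_div]
      rw [div_eq_div_iff (by positivity) hdpos.ne']
      field_simp
    rw [← hreal]
    push_cast
    ring
  refine ⟨hΩp, hΩm, hkey, ?_, ?_⟩
  · intro h1 h2
    have hsin : 0 < Real.sin (2 * φ) :=
      Real.sin_pos_of_pos_of_lt_pi (by linarith) (by linarith)
    have hP : 0 < 2 * I₀ * ω₀ / (L ^ 2 * γ ^ 2) := by positivity
    exact div_pos (mul_pos (mul_pos (mul_pos hP hρ0) hsin) hDpos) hdpos
  · intro h1 h2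
    have hsin : Real.sin (2 * φ) < 0 := by
      have h3 : Real.sin (2 * φ - Real.pi) > 0 :=
        Real.sin_pos_of_pos_of_lt_pi (by linarith) (by linarith [Real.pi_pos])
      rw [Real.sin_sub_pi] at h3
      linarith
    have hP : 0 < 2 * I₀ * ω₀ / (L ^ 2 * γ ^ 2) := by positivity
    apply div_neg_of_neg_of_pos _ hdpos
    have h4 : (2 * I₀ * ω₀ / (L ^ 2 * γ ^ 2)) * ρ * Real.sin (2 * φ) * D
        = ((2 * I₀ * ω₀ / (L ^ 2 * γ ^ 2)) * ρ * D) * Real.sin (2 * φ) := by ring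
    rw [h4]
    exact mul_neg_of_pos_of_neg (mul_pos (mul_pos hP hρ0) hDpos) hsin
end

section
/- Let V be a vector space over ℂ, R_ZF, R_FF, R_xx ∈ ℂ, Z⁰, F⁰, G ∈ V, and K ∈ ℂ with d_K := 1 − R_xx·(R_FF + R_ZF·K) ≠ 0 and d₀ := 1 − R_xx·R_FF ≠ 0. Let Z, F, x, C ∈ V satisfy the controlled equations Z = Z⁰ + R_ZF·x, F = F⁰ + R_FF·x, x = R_xx·(G + F + C), C = K·Z, and let Z', F', x' ∈ V satisfy the uncontrolled equations Z' = Z⁰ + R_ZF·x', F' = F⁰ + R_FF·x', x' = R_xx·(G + F'). Then Z = (d₀/d_K)·Z'. In particular, the controlled output is a nonzero scalar multiple of the uncontrolled output, so the relative magnitudes of the signal contribution (the coefficient of G) and the noise contributions (the coefficients of Z⁰ and F⁰) in the output are independent of the control kernel K. -/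
/-- The controlled output is a nonzero scalar multiple `(d₀/d_K)` of the uncontrolled
output: a feed-back servo changes the dynamics without altering the interferometer's
noise (the relative magnitudes of signal and noise in the output). -/
theorem control_does_not_alter_noise
    {V : Type*} [AddCommGroup V] [Module ℂ V]
    (RZF RFF Rxx K : ℂ)
    (hdK : 1 - Rxx * (RFF + RZF * K) ≠ 0)
    (hd0 : 1 - Rxx * RFF ≠ 0)
    (Z0 F0 G Z F x C Z' F' x' : V)
    (hZ : Z = Z0 + RZF • x)
    (hF : F = F0 + RFF • x)
    (hx : x = Rxx • (G + F + C))
    (hC : C = K • Z)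
    (hZ' : Z' = Z0 + RZF • x')
    (hF' : F' = F0 + RFF • x')
    (hx' : x' = Rxx • (G + F')) :
    Z = ((1 - Rxx * RFF) / (1 - Rxx * (RFF + RZF * K))) • Z' := by
  subst hC hF hZ hF'
  -- solve the circular equations for x and x'
  have hxx : (1 - Rxx * (RFF + RZF * K)) • x
      = Rxx • G + Rxx • F0 + (Rxx * K) • Z0 := by
    linear_combination (norm := module) hx
  have hxx' : (1 - Rxx * RFF) • x' = Rxx • G + Rxx • F0 := by
    linear_combination (norm := module) hx'
  have key : (1 - Rxx * (RFF + RZF * K)) • (Z0 + RZF • x)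
      = (1 - Rxx * RFF) • Z' := by
    rw [hZ']
    linear_combination (norm := module) RZF • hxx - RZF • hxx'
  have h := congrArg (fun v => (1 - Rxx * (RFF + RZF * K))⁻¹ • v) key
  simp only [smul_smul, inv_mul_cancel₀ hdK, one_smul] at h
  rw [h, div_eq_inv_mul]
end

section
/- Let m, λ, ħ, I₀, ω₀, L, γ be positive reals, 0 < ρ < 1, and φ, ζ ∈ ℝ; set t := √(1 − ρ²), D := 1 + 2ρ·cos(2φ) + ρ², Ω± := (±2ργ·sin(2φ) − iγ(1 − ρ²))/D, and define R_xx(Ω) := −4/(m·Ω²), R^C_xx(Ω) := −4/(m·(Ω + iλ)²), and R_ZF(Ω) := i·√(2 I₀ ω₀/(ħ L²))·(t/D)·[(Ω + iγ)·cos(φ + ζ) + ρ·(Ω − iγ)·cos(φ − ζ)]/((Ω − Ω₊)·(Ω − Ω₋)). Then for every Ω ∈ ℂ with Ω ≠ 0, Ω ≠ −iλ, Ω ∉ {Ω₊, Ω₋}, and (Ω + iγ)·cos(φ + ζ) + ρ·(Ω − iγ)·cos(φ − ζ) ≠ 0, the control kernel K_C(Ω) := (1/R_ZF(Ω))·(1/R_xx(Ω)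 − 1/R^C_xx(Ω)) equals (m·λ/(2t))·√(ħ L²/(2 I₀ ω₀))·(Ω + iλ/2)·D·(Ω − Ω₋)·(Ω − Ω₊)/[(Ω + iγ)·cos(φ + ζ) + ρ·(Ω − iγ)·cos(φ − ζ)]. -/
/-! The kernel is a rational identity in `Ω`. The difference of the reciprocal mechanical
susceptibilities is `(m/4)((Ω + iλ)² - Ω²) = i·(mλ/2)(Ω + iλ/2)`, whose factor `i` cancels the
`i` in `R_ZF`; the square root in the answer is the reciprocal of the one in `R_ZF`. -/

open Complex

theorem inv_neg_four_div_sub_inv_neg_four_div {K : Type*} [Field K] [CharZero K] (i m lam Ω : K) :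
    (-4 / (m * Ω ^ 2))⁻¹ - (-4 / (m * (Ω + i * lam) ^ 2))⁻¹
      = i * (m * lam / 2 * (Ω + i * lam / 2)) := by
  simp only [inv_div]
  ring

theorem inv_mul_mul_mul_div_mul_mul {K : Type*} [Field K] {c : K} (hc : c ≠ 0)
    (a b z P w : K) : (c * a * b * z / P)⁻¹ * (c * w) = a⁻¹ * b⁻¹ * P * w / z := by
  rw [inv_div, mul_assoc, mul_assoc, div_mul_eq_mul_div, mul_left_comm P,
    mul_div_mul_left _ _ hc]
  ring

theorem control_kernel_explicit_form_general
    (m lam hbar I₀ ω₀ L γ ρ φ ζ : ℝ)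
    (t : ℝ)
    (D : ℝ)
    (Ωp Ωm : ℂ)
    (Rxx RCxx RZF : ℂ → ℂ)
    (hRxx : ∀ Ω : ℂ, Rxx Ω = -4 / ((m : ℂ) * Ω ^ 2))
    (hRCxx : ∀ Ω : ℂ, RCxx Ω = -4 / ((m : ℂ) * (Ω + Complex.I * (lam : ℂ)) ^ 2))
    (hRZF : ∀ Ω : ℂ, RZF Ω = Complex.I * ((Real.sqrt (2 * I₀ * ω₀ / (hbar * L ^ 2)) : ℝ) : ℂ)
        * (((t / D : ℝ) : ℂ))
        * ((Ω + Complex.I * (γ : ℂ)) * ((Real.cos (φ + ζ) : ℝ) : ℂ)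
            + ((ρ : ℝ) : ℂ) * (Ω - Complex.I * (γ : ℂ)) * ((Real.cos (φ - ζ) : ℝ) : ℂ))
        / ((Ω - Ωp) * (Ω - Ωm)))
    (Ω : ℂ)
    (KC : ℂ)
    (hKC : KC = (1 / RZF Ω) * (1 / Rxx Ω - 1 / RCxx Ω)) :
    KC = ((m * lam / (2 * t) : ℝ) : ℂ) * ((Real.sqrt (hbar * L ^ 2 / (2 * I₀ * ω₀)) : ℝ) : ℂ)
        * (Ω + Complex.I * ((lam : ℝ) : ℂ) / 2)
        * (((D : ℝ) : ℂ) * (Ω - Ωm) * (Ω - Ωp))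
        / ((Ω + Complex.I * (γ : ℂ)) * ((Real.cos (φ + ζ) : ℝ) : ℂ)
            + ((ρ : ℝ) : ℂ) * (Ω - Complex.I * (γ : ℂ)) * ((Real.cos (φ - ζ) : ℝ) : ℂ)) := by
  rw [hKC, one_div, one_div, one_div, hRxx, hRCxx, inv_neg_four_div_sub_inv_neg_four_div, hRZF,
    inv_mul_mul_mul_div_mul_mul I_ne_zero, ← ofReal_inv, ← ofReal_inv, ← Real.sqrt_inv,
    inv_div, inv_div]
  push_cast
  ring

/-- Explicit form (Eq. 3.19) of the feed-back control kernel
`K_C(Ω) = (1/R_ZF)(1/R_xx - 1/R^C_xx)` which converts the free antisymmetric mirror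
mode into an effectively damped oscillator with double pole at `Ω = -iλ`. -/
theorem control_kernel_explicit_form
    (m lam hbar I₀ ω₀ L γ ρ φ ζ : ℝ)
    (hm : 0 < m) (hlam : 0 < lam) (hhb : 0 < hbar) (hI : 0 < I₀) (hω : 0 < ω₀)
    (hL : 0 < L) (hγ : 0 < γ) (hρ0 : 0 < ρ) (hρ1 : ρ < 1)
    (t : ℝ) (ht : t = Real.sqrt (1 - ρ ^ 2))
    (D : ℝ) (hD : D = 1 + 2 * ρ * Real.cos (2 * φ) + ρ ^ 2)
    (Ωp Ωm : ℂ)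
    (hp : Ωp = (((2 * ρ * γ * Real.sin (2 * φ) : ℝ) : ℂ)
          - Complex.I * (γ : ℂ) * ((1 - ρ ^ 2 : ℝ) : ℂ)) / ((D : ℝ) : ℂ))
    (hm' : Ωm = (((-(2 * ρ * γ * Real.sin (2 * φ)) : ℝ) : ℂ)
          - Complex.I * (γ : ℂ) * ((1 - ρ ^ 2 : ℝ) : ℂ)) / ((D : ℝ) : ℂ))
    (Rxx RCxx RZF : ℂ → ℂ)
    (hRxx : ∀ Ω : ℂ, Rxx Ω = -4 / ((m : ℂ) * Ω ^ 2))
    (hRCxx : ∀ Ω : ℂ, RCxx Ω = -4 / ((m : ℂ) * (Ω + Complex.I * (lam : ℂ)) ^ 2))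
    (hRZF : ∀ Ω : ℂ, RZF Ω = Complex.I * ((Real.sqrt (2 * I₀ * ω₀ / (hbar * L ^ 2)) : ℝ) : ℂ)
        * (((t / D : ℝ) : ℂ))
        * ((Ω + Complex.I * (γ : ℂ)) * ((Real.cos (φ + ζ) : ℝ) : ℂ)
            + ((ρ : ℝ) : ℂ) * (Ω - Complex.I * (γ : ℂ)) * ((Real.cos (φ - ζ) : ℝ) : ℂ))
        / ((Ω - Ωp) * (Ω - Ωm)))
    (Ω : ℂ)
    (h0 : Ω ≠ 0) (hlam' : Ω ≠ -Complex.I * (lam : ℂ)) (h1 : Ω ≠ Ωp) (h2 : Ω ≠ Ωm)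
    (hden : (Ω + Complex.I * (γ : ℂ)) * ((Real.cos (φ + ζ) : ℝ) : ℂ)
        + ((ρ : ℝ) : ℂ) * (Ω - Complex.I * (γ : ℂ)) * ((Real.cos (φ - ζ) : ℝ) : ℂ) ≠ 0)
    (KC : ℂ)
    (hKC : KC = (1 / RZF Ω) * (1 / Rxx Ω - 1 / RCxx Ω)) :
    KC = ((m * lam / (2 * t) : ℝ) : ℂ) * ((Real.sqrt (hbar * L ^ 2 / (2 * I₀ * ω₀)) : ℝ) : ℂ)
        * (Ω + Complex.I * ((lam : ℝ) : ℂ) / 2)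
        * (((D : ℝ) : ℂ) * (Ω - Ωm) * (Ω - Ωp))
        / ((Ω + Complex.I * (γ : ℂ)) * ((Real.cos (φ + ζ) : ℝ) : ℂ)
            + ((ρ : ℝ) : ℂ) * (Ω - Complex.I * (γ : ℂ)) * ((Real.cos (φ - ζ) : ℝ) : ℂ)) :=
  control_kernel_explicit_form_general m lam hbar I₀ ω₀ L γ ρ φ ζ t D Ωp Ωm Rxx RCxx RZF hRxx hRCxx
    hRZF Ω KC hKC
end

section
/- Let γ > 0, 0 ≤ ρ < 1, 0 < φ < π/2, and π/2 ≤ ζ ≤ π. Then every Ω ∈ ℂ satisfying (Ω + iγ)·cos(φ + ζ) + ρ·(Ω − iγ)·cos(φ − ζ) = 0 has Im(Ω) < 0. -/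
/-- For `0 < φ < π/2` and `π/2 ≤ ζ ≤ π`, every pole of the control kernel, i.e. every
zero of `(Ω + iγ)cos(φ+ζ) + ρ(Ω - iγ)cos(φ-ζ)`, lies strictly in the lower half of the
complex frequency plane, so the kernel is causal, regardless of the SR reflectivity. -/
theorem control_kernel_poles_lower_half_plane
    (γ ρ φ ζ : ℝ) (hγ : 0 < γ) (hρ0 : 0 ≤ ρ) (hρ1 : ρ < 1)
    (hφ0 : 0 < φ) (hφ1 : φ < Real.pi / 2)
    (hζ0 : Real.pi / 2 ≤ ζ) (hζ1 : ζ ≤ Real.pi)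
    (Ω : ℂ)
    (hΩ : (Ω + Complex.I * (γ : ℂ)) * ((Real.cos (φ + ζ) : ℝ) : ℂ)
        + ((ρ : ℝ) : ℂ) * (Ω - Complex.I * (γ : ℂ)) * ((Real.cos (φ - ζ) : ℝ) : ℂ) = 0) :
    Ω.im < 0 := by
  set a := Real.cos (φ + ζ) with ha_def
  set b := Real.cos (φ - ζ) with hb_def
  -- a < 0 since π/2 < φ + ζ < 3π/2
  have ha : a < 0 := by
    apply Real.cos_neg_of_pi_div_two_lt_of_lt
    · linarith
    · linarith [Real.pi_pos]
  -- |b| ≤ -a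
  have hsum : a + b = 2 * Real.cos φ * Real.cos ζ := by
    rw [ha_def, hb_def, Real.cos_add, Real.cos_sub]; ring
  have hdiff : b - a = 2 * Real.sin φ * Real.sin ζ := by
    rw [ha_def, hb_def, Real.cos_add, Real.cos_sub]; ring
  have hcosζ : Real.cos ζ ≤ 0 := Real.cos_nonpos_of_pi_div_two_le_of_le hζ0 (by linarith [Real.pi_pos])
  have hcosφ : 0 < Real.cos φ := Real.cos_pos_of_mem_Ioo ⟨by linarith, hφ1⟩
  have hsinζ : 0 ≤ Real.sin ζ := Real.sin_nonneg_of_nonneg_of_le_pi (by linarith [Real.pi_pos]) hζ1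
  have hsinφ : 0 ≤ Real.sin φ := Real.sin_nonneg_of_nonneg_of_le_pi hφ0.le (by linarith [Real.pi_pos])
  have hb_le : b ≤ -a := by nlinarith
  have hb_ge : -b ≤ -a := by nlinarith
  -- hence ρ|b| < -a
  have h1 : a + ρ * b < 0 := by nlinarith
  have h2 : 0 < ρ * b - a := by nlinarith
  -- imaginary part of the equation
  have him := congrArg Complex.im hΩ
  simp [Complex.add_im, Complex.mul_im, Complex.sub_im, Complex.ofReal_im,
    Complex.I_im, Complex.I_re, Complex.ofReal_re] at him
  -- him : Ω.im * (a + ρ b) + γ (a - ρ b) = 0 (in some form)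
  nlinarith [him, mul_pos hγ h2]
end
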